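/- (Completeness of the verification test.) Let f : {0,1}^n → {0,1} be τ-granular for some τ ∈ (0,1], meaning that for every s ∈ {0,1}^n either ĝ(s) = 0 or |ĝ(s)| ≥ τ, where g(x) = (-1)^{f(x)}. Let L ⊆ {0,1}^n with |L| ≤ 2/τ² contain the entire support of ĝ, i.e. {s : ĝ(s) ≠ 0} ⊆ L, and let g̃ : L → ℝ satisfy |g̃(s) - ĝ(s)| ≤ τ³/8 for all s ∈ L. Then Σ_{s ∈ L} ĝ(s)² = 1 and the test statistic satisfies S̃ = Σ_{s ∈ L} g̃(s)² ≥ 1 - τ²/2. -/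

import Mathlib

open Finset

/-- The mod-2 inner product `s·x = Σᵢ sᵢxᵢ mod 2`. -/
def dotp {n : ℕ} (s x : Fin n → ZMod 2) : ZMod 2 := ∑ i, s i * x i

/-- The Fourier coefficient `ĝ(s) = 2⁻ⁿ Σₓ (-1)^{f(x)} (-1)^{s·x}` of `g = (-1)^f`. -/
noncomputable def hatg {n : ℕ} (f : (Fin n → ZMod 2) → ZMod 2)
    (s : Fin n → ZMod 2) : ℝ :=
  (1 / 2 ^ n) * ∑ x, (-1 : ℝ) ^ (f x).val * (-1 : ℝ) ^ (dotp s x).val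


noncomputable def chi (a : ZMod 2) : ℝ := (-1 : ℝ) ^ a.val

lemma chi_add (a b : ZMod 2) : chi (a + b) = chi a * chi b := by
  unfold chi
  rw [← pow_add, ZMod.val_add, ← neg_one_pow_eq_pow_mod_two]

lemma chi_zero : chi 0 = 1 := by simp [chi]

lemma chi_sum {ι : Type*} [DecidableEq ι] (t : Finset ι) (g : ι → ZMod 2) :
    chi (∑ i ∈ t, g i) = ∏ i ∈ t, chi (g i) := by
  induction t using Finset.induction with
  | empty => simp [chi_zero]
  | insert a s h ih => simp [Finset.sum_insert h, Finset.prod_insert h, chi_add, ih]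

lemma sum_chi_single (c : ZMod 2) : ∑ b : ZMod 2, chi (c * b) = if c = 0 then 2 else 0 := by
  have : ∀ h : ZMod 2 → ℝ, ∑ b : ZMod 2, h b = h 0 + h 1 := fun h => by
    exact Fin.sum_univ_two h
  rcases (by decide : ∀ c : ZMod 2, c = 0 ∨ c = 1) c with rfl | rfl <;> rw [this] <;> norm_num [chi, ZMod.val_one]

lemma sum_chi {n : ℕ} (z : Fin n → ZMod 2) :
    ∑ x : Fin n → ZMod 2, chi (dotp z x) = if z = 0 then 2 ^ n else 0 := by
  have h1 : ∀ x : Fin n → ZMod 2, chi (dotp z x) = ∏ i, chi (z i * x i) := fun x =>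
    chi_sum _ _
  simp only [h1]
  rw [← Fintype.piFinset_univ, Finset.sum_prod_piFinset univ (fun i b => chi (z i * b))]
  simp only [sum_chi_single]
  by_cases hz : z = 0
  · simp [hz]
  · rw [if_neg hz]
    obtain ⟨i, hi⟩ := Function.ne_iff.mp hz
    exact Finset.prod_eq_zero (Finset.mem_univ i) (by simpa using hi)

lemma chi_mul_self (a : ZMod 2) : chi a * chi a = 1 := by
  unfold chi; rw [← mul_pow]; norm_num

lemma dotp_add_right {n : ℕ} (s x y : Fin n → ZMod 2) :
    dotp s (x + y) = dotp s x + dotp s y := by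
  simp [dotp, mul_add, Finset.sum_add_distrib]

lemma dotp_comm {n : ℕ} (s x : Fin n → ZMod 2) : dotp s x = dotp x s := by
  simp [dotp, mul_comm]

lemma pi_add_eq_zero_iff {n : ℕ} (x y : Fin n → ZMod 2) : x + y = 0 ↔ y = x := by
  constructor
  · intro h; funext i
    have h2 := congrFun h i
    simp only [Pi.add_apply, Pi.zero_apply] at h2
    revert h2; generalize x i = a; generalize y i = b; revert a b; decide
  · rintro rfl; funext i
    simp only [Pi.add_apply, Pi.zero_apply]
    generalize y i = a; revert a; decide

lemma parseval {n : ℕ} (f : (Fin n → ZMod 2) → ZMod 2) :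
    ∑ s : Fin n → ZMod 2, (hatg f s) ^ 2 = 1 := by
  have hs : ∀ s, hatg f s = (1 / 2 ^ n) * ∑ x, chi (f x) * chi (dotp s x) := fun s => rfl
  have key : ∀ s : Fin n → ZMod 2,
      (hatg f s) ^ 2 = (1 / 2 ^ n : ℝ) ^ 2 *
        ∑ x, ∑ y, (chi (f x) * chi (f y)) * chi (dotp (x + y) s) := by
    intro s
    rw [hs, mul_pow, pow_two (∑ x, chi (f x) * chi (dotp s x)), Finset.sum_mul_sum]
    congr 1
    refine Finset.sum_congr rfl fun x _ => Finset.sum_congr rfl fun y _ => ?_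
    rw [dotp_comm (x + y) s, dotp_add_right, chi_add]
    ring
  rw [Finset.sum_congr rfl fun s _ => key s, ← Finset.mul_sum]
  rw [Finset.sum_comm]
  have h2 : ∀ x : Fin n → ZMod 2,
      ∑ s, ∑ y, (chi (f x) * chi (f y)) * chi (dotp (x + y) s)
        = (2 : ℝ) ^ n := by
    intro x
    rw [Finset.sum_comm]
    have h3 : ∀ y : Fin n → ZMod 2,
        ∑ s, (chi (f x) * chi (f y)) * chi (dotp (x + y) s)
          = (chi (f x) * chi (f y)) * (if y = x then (2 : ℝ) ^ n else 0) := by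
      intro y
      rw [← Finset.mul_sum, sum_chi, if_congr (pi_add_eq_zero_iff x y) rfl rfl]
    rw [Finset.sum_congr rfl fun y _ => h3 y]
    simp [mul_ite, mul_zero, Finset.sum_ite_eq', chi_mul_self]
  rw [Finset.sum_congr rfl fun x _ => h2 x]
  simp only [Finset.sum_const, Finset.card_univ, nsmul_eq_mul]
  have : (Fintype.card (Fin n → ZMod 2) : ℝ) = 2 ^ n := by
    simp [Fintype.card_fun]
  rw [this]
  field_simp

lemma term_bound (τ a b : ℝ) (hτ0 : 0 < τ) (hτ1 : τ ≤ 1)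
    (hg : a = 0 ∨ τ ≤ |a|) (hb : |b - a| ≤ τ ^ 3 / 8) :
    (1 - τ ^ 2 / 4) * a ^ 2 ≤ b ^ 2 := by
  rcases hg with h | h
  · rw [h]; nlinarith [sq_nonneg b]
  · obtain ⟨h1, h2⟩ := abs_le.mp hb
    have hε : τ ^ 3 / 8 ≤ τ / 8 := by
      nlinarith [mul_nonneg (mul_nonneg hτ0.le (sub_nonneg.mpr hτ1)) (by linarith : (0:ℝ) ≤ 1 + τ)]
    rcases abs_cases a with ⟨e, ha⟩ | ⟨e, ha⟩ <;> rw [e] at h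
    · have key1 : 0 ≤ (b - a + τ ^ 3 / 8) * (b + a - τ ^ 3 / 8) :=
        mul_nonneg (by linarith) (by linarith)
      have key2 : 0 ≤ (τ ^ 2 * a) * (a - τ) :=
        mul_nonneg (mul_nonneg (sq_nonneg τ) (by linarith)) (by linarith)
      nlinarith [key1, key2, sq_nonneg (τ ^ 3 / 8)]
    · have key1 : 0 ≤ (a + τ ^ 3 / 8 - b) * (-(b + a + τ ^ 3 / 8)) :=
        mul_nonneg (by linarith) (by linarith)
      have key2 : 0 ≤ (τ ^ 2 * (-a)) * (-a - τ) :=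
        mul_nonneg (mul_nonneg (sq_nonneg τ) (by linarith)) (by linarith)
      nlinarith [key1, key2, sq_nonneg (τ ^ 3 / 8)]


/-- Completeness of the verification test: if `f` is `τ`-granular, `L` (with
`|L| ≤ 2/τ²`) contains the support of `ĝ`, and `g̃` is `τ³/8`-accurate on `L`, then
`Σ_{s∈L} ĝ(s)² = 1` and the test statistic `S̃ = Σ_{s∈L} g̃(s)²` is at least
`1 - τ²/2`. -/
theorem verification_test_complete (n : ℕ) (hn : 0 < n)
    (f : (Fin n → ZMod 2) → ZMod 2) (τ : ℝ) (hτ : τ ∈ Set.Ioc (0 : ℝ) 1)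
    (hgran : ∀ s, hatg f s = 0 ∨ τ ≤ |hatg f s|)
    (L : Finset (Fin n → ZMod 2)) (hLcard : (L.card : ℝ) ≤ 2 / τ ^ 2)
    (hLsupp : ∀ s, hatg f s ≠ 0 → s ∈ L)
    (gtil : (Fin n → ZMod 2) → ℝ)
    (hgtil : ∀ s ∈ L, |gtil s - hatg f s| ≤ τ ^ 3 / 8) :
    (∑ s ∈ L, (hatg f s) ^ 2 = 1) ∧ 1 - τ ^ 2 / 2 ≤ ∑ s ∈ L, (gtil s) ^ 2 := by
  obtain ⟨hτ0, hτ1⟩ := hτ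
  have hPar : ∑ s ∈ L, hatg f s ^ 2 = 1 := by
    rw [← parseval f]
    exact Finset.sum_subset (Finset.subset_univ L) (fun s _ hs => by
      have h0 : hatg f s = 0 := by_contra fun h => hs (hLsupp s h)
      simp [h0])
  refine ⟨hPar, ?_⟩
  calc 1 - τ ^ 2 / 2 ≤ (1 - τ ^ 2 / 4) * 1 := by nlinarith
    _ = ∑ s ∈ L, (1 - τ ^ 2 / 4) * hatg f s ^ 2 := by rw [← Finset.mul_sum, hPar]
    _ ≤ ∑ s ∈ L, gtil s ^ 2 := Finset.sum_le_sum fun s hs =>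
        term_bound τ (hatg f s) (gtil s) hτ0 hτ1 (hgran s) (hgtil s hs)
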